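/- For all natural numbers n and k with 0 ≤ k ≤ n, the 5-adic valuation of the fibonomial coefficient C(n,k)_F equals the 5-adic valuation of the ordinary binomial coefficient C(n,k); that is, ν₅(C(n,k)_F) = ν₅(C(n,k)). -/
import Mathlib

open Nat

/-- The fibotorial `n!_F = F_n · F_{n-1} ⋯ F_1`, with `0!_F = 1`. -/
def fibotorial (n : ℕ) : ℕ := ∏ i ∈ Finset.range n, Nat.fib (i + 1)

/-- The fibonomial coefficient `C(n,k)_F = n!_F / (k!_F · (n-k)!_F)` for `k ≤ n`,
and `0` otherwise. -/
def fibnomial (n k : ℕ) : ℕ :=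
  if k ≤ n then fibotorial n / (fibotorial k * fibotorial (n - k)) else 0

-- Cassini-style quantity
private def cas (n : ℕ) : ℤ :=
  (fib (n+1) : ℤ)^2 - fib n * fib (n+1) - (fib n : ℤ)^2

private lemma cas_succ (n : ℕ) : cas (n+1) = - cas n := by
  simp only [cas, fib_add_two]
  push_cast
  ring

private lemma cas_sq (n : ℕ) : cas n * cas n = 1 := by
  induction n with
  | zero => simp [cas]
  | succ n ih => rw [cas_succ]; linarith [ih]

private lemma fibZ_add_five (m : ℕ) :
    (fib (m+5) : ℤ) = 5 * fib (m+1) + 3 * fib m := by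
  have h : fib (m+5) = 5 * fib (m+1) + 3 * fib m := by
    have e2 : fib (m+2) = fib m + fib (m+1) := fib_add_two
    have e3 : fib (m+3) = fib (m+1) + fib (m+2) := fib_add_two
    have e4 : fib (m+4) = fib (m+2) + fib (m+3) := fib_add_two
    have e5 : fib (m+5) = fib (m+3) + fib (m+4) := fib_add_two
    omega
  exact_mod_cast h

private lemma fibZ_add_six (m : ℕ) :
    (fib (m+6) : ℤ) = 8 * fib (m+1) + 5 * fib m := by
  have h : (fib (m+6) : ℤ) = fib (m+1+5) := by norm_num [show m+1+5 = m+6 from rfl]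
  rw [h, fibZ_add_five, show m+1+1 = m+2 from rfl]
  have h2 : (fib (m+2) : ℤ) = fib m + fib (m+1) := by exact_mod_cast (fib_add_two (n := m))
  rw [h2]; ring

private lemma fib_five_mul (n : ℕ) :
    (fib (5*n) : ℤ) = 5*(fib n)*(fib (n+1))^4 - 10*(fib n)^2*(fib (n+1))^3
      + 20*(fib n)^3*(fib (n+1))^2 - 15*(fib n)^4*(fib (n+1)) + 5*(fib n)^5 ∧
    (fib (5*n+1) : ℤ) = (fib (n+1))^5 + 10*(fib n)^2*(fib (n+1))^3
      - 10*(fib n)^3*(fib (n+1))^2 + 10*(fib n)^4*(fib (n+1)) - 3*(fib n)^5 := by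
  induction n with
  | zero => norm_num
  | succ n ih =>
    obtain ⟨h1, h2⟩ := ih
    have e5 : 5*(n+1) = 5*n+5 := by ring
    have e6 : 5*(n+1)+1 = 5*n+6 := by ring
    have eb : (fib (n+2) : ℤ) = fib n + fib (n+1) := by
      exact_mod_cast (fib_add_two (n := n))
    constructor
    · rw [e5, fibZ_add_five, h1, h2, show n+1+1 = n+2 from rfl, eb]; ring
    · rw [e6, fibZ_add_six, h1, h2, show n+1+1 = n+2 from rfl, eb]; ring

private lemma fib_five_factor (n : ℕ) :
    (fib (5*n) : ℤ) = fib n * (5 * (5*(fib n)^4 + 5 * cas n * (fib n)^2 + 1)) := by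
  have h := (fib_five_mul n).1
  have hc := cas_sq n
  rw [h]
  simp only [cas] at hc ⊢
  nlinarith [hc]

private lemma five_dvd_fib_iff (n : ℕ) : 5 ∣ fib n ↔ 5 ∣ n := by
  induction n using Nat.strong_induction_on with
  | _ n ih =>
    match n, ih with
    | 0, _ => simp
    | 1, _ => decide
    | 2, _ => decide
    | 3, _ => decide
    | 4, _ => decide
    | (m+5), ih =>
      have h5 : fib (m+5) = 5 * fib (m+1) + 3 * fib m := by
        exact_mod_cast fibZ_add_five m
      have := ih m (by omega)
      rw [h5]
      omega

private lemma val_fib_five (n : ℕ) (hn : n ≠ 0) :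
    padicValNat 5 (fib (5*n)) = padicValNat 5 (fib n) + 1 := by
  haveI : Fact (Nat.Prime 5) := ⟨by norm_num⟩
  have hfn : fib n ≠ 0 := by
    have : 0 < fib n := fib_pos.mpr (by omega)
    omega
  have hdvd : fib n ∣ fib (5*n) := fib_dvd n (5*n) ⟨5, by ring⟩
  obtain ⟨r, hr⟩ := hdvd
  have hrZ : (r : ℤ) = 5 * (5*(fib n)^4 + 5 * cas n * (fib n)^2 + 1) := by
    have h := fib_five_factor n
    rw [hr] at h
    push_cast at h
    have hfnZ : (fib n : ℤ) ≠ 0 := by exact_mod_cast hfn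
    exact mul_left_cancel₀ hfnZ h
  have h5r : 5 ∣ r := by
    have : (5 : ℤ) ∣ (r : ℤ) := ⟨_, hrZ⟩
    exact_mod_cast this
  obtain ⟨s, hs⟩ := h5r
  have hsZ : (s : ℤ) = 5*(fib n)^4 + 5 * cas n * (fib n)^2 + 1 := by
    have h : ((5 * s : ℕ) : ℤ) = 5 * (5*(fib n)^4 + 5 * cas n * (fib n)^2 + 1) := by
      rw [← hs]; exact hrZ
    push_cast at h
    linarith
  have h5s : ¬ 5 ∣ s := by
    intro hd
    have h1 : (5 : ℤ) ∣ (s : ℤ) := by exact_mod_cast hd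
    rw [hsZ] at h1
    have h2 : (5 : ℤ) ∣ 1 :=
      (dvd_add_right ⟨(fib n)^4 + cas n * (fib n)^2, by ring⟩).mp h1
    norm_num at h2
  have hs0 : s ≠ 0 := by
    rintro rfl
    simp at hsZ
    exact h5s (by simp)
  rw [hr, hs, padicValNat.mul hfn (by omega), padicValNat.mul (by norm_num) hs0,
    padicValNat.self (by norm_num), padicValNat.eq_zero_of_not_dvd h5s]

private lemma val_fib (n : ℕ) : padicValNat 5 (fib n) = padicValNat 5 n := by
  induction n using Nat.strong_induction_on with
  | _ n ih =>
    rcases Nat.eq_zero_or_pos n with rfl | hn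
    · simp
    by_cases h5 : 5 ∣ n
    · obtain ⟨m, rfl⟩ := h5
      have hm : m ≠ 0 := by omega
      haveI : Fact (Nat.Prime 5) := ⟨by norm_num⟩
      rw [val_fib_five m hm, ih m (by omega),
        padicValNat.mul (by norm_num) hm, padicValNat.self (by norm_num)]
      omega
    · rw [padicValNat.eq_zero_of_not_dvd ((five_dvd_fib_iff n).not.mpr h5),
        padicValNat.eq_zero_of_not_dvd h5]

private lemma fibotorial_pos (n : ℕ) : 0 < fibotorial n := by
  apply Finset.prod_pos
  intro i _
  exact fib_pos.mpr (by omega)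

private lemma fibotorial_succ (n : ℕ) : fibotorial (n+1) = fibotorial n * fib (n+1) :=
  Finset.prod_range_succ _ _

private lemma val_fibotorial (n : ℕ) :
    padicValNat 5 (fibotorial n) = padicValNat 5 n.factorial := by
  haveI : Fact (Nat.Prime 5) := ⟨by norm_num⟩
  induction n with
  | zero => simp [fibotorial]
  | succ n ih =>
    have h2 : (n+1).factorial = n.factorial * (n+1) := by
      rw [Nat.factorial_succ]; ring
    have hf : fib (n+1) ≠ 0 := (fib_pos.mpr (by omega)).ne'
    rw [fibotorial_succ, h2, padicValNat.mul (fibotorial_pos n).ne' hf,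
      padicValNat.mul (Nat.factorial_ne_zero n) (by omega), ih, val_fib]

private lemma fibotorial_dvd (n : ℕ) : ∀ k ≤ n,
    fibotorial k * fibotorial (n - k) ∣ fibotorial n := by
  induction n using Nat.strong_induction_on with
  | _ n ih =>
    intro k h
    rcases Nat.eq_zero_or_pos k with rfl | hk
    · simp [fibotorial]
    rcases Nat.eq_or_lt_of_le h with rfl | hkn
    · simp [fibotorial]
    obtain ⟨m, rfl⟩ : ∃ m, n = m + 1 := ⟨n - 1, by omega⟩
    have hfib : fib (m+1) = fib (k-1) * fib (m+1-k) + fib k * fib (m+1-k+1) := by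
      have h' := fib_add (k-1) (m+1-k)
      rw [show k-1+(m+1-k)+1 = m+1 by omega, show k-1+1 = k by omega] at h'
      exact h'
    have hexp : fibotorial (m+1)
        = fibotorial m * fib (k-1) * fib (m+1-k) + fibotorial m * fib k * fib (m+1-k+1) := by
      rw [fibotorial_succ, hfib]; ring
    rw [hexp]
    apply dvd_add
    · have hIH := ih m (by omega) k (by omega)
      have h1 : fibotorial (m-k) * fib (m+1-k) = fibotorial (m+1-k) := by
        rw [show m+1-k = (m-k)+1 by omega, fibotorial_succ]
      calc fibotorial k * fibotorial (m+1-k)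
          = (fibotorial k * fibotorial (m-k)) * fib (m+1-k) := by rw [← h1]; ring
        _ ∣ fibotorial m * fib (m+1-k) := mul_dvd_mul_right hIH _
        _ ∣ fibotorial m * fib (k-1) * fib (m+1-k) := ⟨fib (k-1), by ring⟩
    · have hIH := ih m (by omega) (k-1) (by omega)
      have h1 : fibotorial (k-1) * fib k = fibotorial k := by
        rw [show k = (k-1)+1 by omega, fibotorial_succ, show k-1+1 = k by omega]
      rw [show m - (k-1) = m+1-k by omega] at hIH
      calc fibotorial k * fibotorial (m+1-k)
          = (fibotorial (k-1) * fibotorial (m+1-k)) * fib k := by rw [← h1]; ring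
        _ ∣ fibotorial m * fib k := mul_dvd_mul_right hIH _
        _ ∣ fibotorial m * fib k * fib (m+1-k+1) := dvd_mul_right _ _

theorem fibnomial_five_adic_valuation (n k : ℕ) (h : k ≤ n) :
    padicValNat 5 (fibnomial n k) = padicValNat 5 (n.choose k) := by
  haveI : Fact (Nat.Prime 5) := ⟨by norm_num⟩
  have hdvd := fibotorial_dvd n k h
  obtain ⟨q, hq⟩ := hdvd
  have hq0 : q ≠ 0 := by
    rintro rfl
    exact absurd hq (by simp [(fibotorial_pos n).ne'])
  have hD0 : fibotorial k * fibotorial (n-k) ≠ 0 := by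
    have := fibotorial_pos k
    have := fibotorial_pos (n-k)
    positivity
  have hfib : fibnomial n k = q := by
    rw [fibnomial, if_pos h, hq, Nat.mul_div_cancel_left _ (by omega)]
  -- valuation equation from fibotorial side
  have hval1 : padicValNat 5 (fibotorial n)
      = padicValNat 5 (fibotorial k) + padicValNat 5 (fibotorial (n-k)) + padicValNat 5 q := by
    rw [hq, padicValNat.mul hD0 hq0, padicValNat.mul (fibotorial_pos k).ne' (fibotorial_pos (n-k)).ne']
  -- valuation equation from factorial side
  have hch := Nat.choose_mul_factorial_mul_factorial h
  have hch0 : n.choose k ≠ 0 := (Nat.choose_pos h).ne'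
  have hval2 : padicValNat 5 n.factorial
      = padicValNat 5 k.factorial + padicValNat 5 (n-k).factorial + padicValNat 5 (n.choose k) := by
    rw [← hch, padicValNat.mul (by positivity) (Nat.factorial_ne_zero _),
      padicValNat.mul hch0 (Nat.factorial_ne_zero _)]
    omega
  rw [hfib]
  have e1 := val_fibotorial n
  have e2 := val_fibotorial k
  have e3 := val_fibotorial (n-k)
  omega
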